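/- Let n ≥ 2, q ≥ n², and let α₀, α₁, …, α_{n−2} be non-negative real numbers. Let G = Σ_{k=0}^{n−2} α_k (F ⊗ E_k^{(n−2)}), a q^{n−1} × q^n matrix with rows indexed by (z,w) ∈ [q] × [q]^{n−2} and columns indexed by y ∈ [q]^n. Call a row (z,w) legal if the entries of w are pairwise distinct and z does not occur among the entries of w; call a column y legal if the entries of y are pairwise distinct. Then the sum of the entries of G over all legal rows and legal columns is at least α₀ · q^{−(n−1/2)} · R · C, where R is the number of legal rows and C is the number of legal columns. -/
import Mathlib


noncomputable section

namespace ED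

/-- The `q × q` matrix all of whose entries are `1/q`. -/
def E0 (q : ℕ) : Matrix (Fin q) (Fin q) ℝ := Matrix.of fun _ _ => 1 / q

/-- `E₁ = I - E₀`. -/
def E1 (q : ℕ) : Matrix (Fin q) (Fin q) ℝ :=
  Matrix.of fun x y => (if x = y then 1 else 0) - 1 / q

/-- The projector `E_k^{(m)}` of the Hamming association scheme. -/
def Ek (q m k : ℕ) : Matrix (Fin m → Fin q) (Fin m → Fin q) ℝ :=
  Matrix.of fun x y => ∑ S ∈ Finset.powersetCard k (Finset.univ : Finset (Fin m)),
    ∏ i, (if i ∈ S then E1 q (x i) (y i) else E0 q (x i) (y i))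

/-- The `q × q²` matrix with all entries `q^{-3/2}`. -/
def F0 (q : ℕ) : Matrix (Fin q) (Fin q × Fin q) ℝ :=
  Matrix.of fun _ _ => ((q : ℝ) * Real.sqrt q)⁻¹

/-- The `q × q²` matrix with entries `q^{-1/2}((E₁)_{x,y₁} + (E₁)_{x,y₂})`. -/
def F1 (q : ℕ) : Matrix (Fin q) (Fin q × Fin q) ℝ :=
  Matrix.of fun x y => (Real.sqrt q)⁻¹ * (E1 q x y.1 + E1 q x y.2)

/-- `F = F₀ + F₁`. -/
def FF (q : ℕ) : Matrix (Fin q) (Fin q × Fin q) ℝ := F0 q + F1 q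

/-- The increasing enumeration of `[n] \ {a,b}`. -/
def embCompl {n : ℕ} (a b : Fin n) (h : a ≠ b) : Fin (n - 2) → Fin n :=
  fun i => (({a, b}ᶜ : Finset (Fin n)).orderIsoOfFin
    (by rw [Finset.card_compl, Finset.card_pair h, Fintype.card_fin]) i : Fin n)

/-- For a `q^{n-1} × q^n` matrix `G` (rows indexed by `[q] × [q]^{n-2}`, columns by
`([q] × [q]) × [q]^{n-2}`), the matrix `G_{a,b}` with rows indexed by strings
`x ∈ [q]^n` with `x a = x b`, and columns by `[q]^n`. -/
def subMat {n q : ℕ}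
    (G : Matrix (Fin q × (Fin (n - 2) → Fin q)) ((Fin q × Fin q) × (Fin (n - 2) → Fin q)) ℝ)
    (a b : Fin n) (h : a ≠ b) :
    Matrix {x : Fin n → Fin q // x a = x b} (Fin n → Fin q) ℝ :=
  Matrix.of fun x y =>
    G (x.1 a, fun i => x.1 (embCompl a b h i)) ((y a, y b), fun i => y (embCompl a b h i))

/-- The spectral norm (largest singular value) of a real matrix. -/
def specNorm {m n : Type*} [Fintype m] [Fintype n] [DecidableEq n] (A : Matrix m n ℝ) : ℝ :=
  ‖LinearMap.toContinuousLinearMap (Matrix.toEuclideanLin A)‖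

end ED


namespace Aux
open Finset ED

lemma sum_E1 {q : ℕ} (s : Finset (Fin q)) (z : Fin q) :
    ∑ a ∈ s, E1 q z a = (if z ∈ s then (1:ℝ) else 0) - s.card / q := by
  simp only [E1, Matrix.of_apply, Finset.sum_sub_distrib, Finset.sum_ite_eq, Finset.sum_const,
    nsmul_eq_mul, mul_one_div]

lemma E1_symm {q : ℕ} (x y : Fin q) : E1 q x y = E1 q y x := by
  simp only [E1, Matrix.of_apply, eq_comm]

lemma idem {q : ℕ} (hq : 0 < q) (c : Prop) [Decidable c] (x y : Fin q) :
    ∑ t : Fin q, (if c then E1 q x t else E0 q x t) * (if c then E1 q t y else E0 q t y)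
      = if c then E1 q x y else E0 q x y := by
  have hq' : (q:ℝ) ≠ 0 := Nat.cast_ne_zero.2 hq.ne'
  split_ifs with h
  · simp only [E1, Matrix.of_apply]
    have : ∀ t : Fin q, ((if x = t then (1:ℝ) else 0) - 1/q) * ((if t = y then (1:ℝ) else 0) - 1/q)
        = (if x = t then (1:ℝ) else 0) * (if t = y then (1:ℝ) else 0)
          - (1/q) * (if x = t then (1:ℝ) else 0) - (1/q) * (if t = y then (1:ℝ) else 0) + 1/q^2 := by
      intro t; ring
    rw [Finset.sum_congr rfl fun t _ => this t]
    simp only [Finset.sum_add_distrib, Finset.sum_sub_distrib, ← Finset.mul_sum,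
      Finset.sum_const, Finset.card_univ, Fintype.card_fin, nsmul_eq_mul]
    have h1 : (∑ t : Fin q, (if x = t then (1:ℝ) else 0) * if t = y then 1 else 0)
        = if x = y then (1:ℝ) else 0 := by
      rw [Finset.sum_eq_single x]
      · simp
      · intro b _ hb; simp [Ne.symm hb]
      · simp
    have h2 : (∑ t : Fin q, if x = t then (1:ℝ) else 0) = 1 := by simp
    have h3 : (∑ t : Fin q, if t = y then (1:ℝ) else 0) = 1 := by simp
    rw [h1, h2, h3]
    field_simp
    split_ifs <;> ring
  · simp only [E0, Matrix.of_apply, Finset.sum_const, Finset.card_univ, Fintype.card_fin,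
      nsmul_eq_mul]
    field_simp


lemma if_symm {q : ℕ} (c : Prop) [Decidable c] (x y : Fin q) :
    (if c then E1 q x y else E0 q x y) = (if c then E1 q y x else E0 q y x) := by
  split_ifs with h
  · exact E1_symm x y
  · rfl

lemma psd_term {q m : ℕ} (hq : 0 < q) (S : Finset (Fin m)) (v : (Fin m → Fin q) → ℝ) :
    0 ≤ ∑ w : Fin m → Fin q, ∑ y : Fin m → Fin q,
        v w * v y * ∏ i, (if i ∈ S then E1 q (w i) (y i) else E0 q (w i) (y i)) := by
  classical
  set A : Fin m → Fin q → Fin q → ℝ := fun i x y => if i ∈ S then E1 q x y else E0 q x y with hA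
  have key : ∀ w y : Fin m → Fin q, (∏ i, A i (w i) (y i))
      = ∑ t : Fin m → Fin q, ∏ i, (A i (w i) (t i) * A i (y i) (t i)) := by
    intro w y
    rw [← Fintype.prod_sum (fun i j => A i (w i) j * A i (y i) j)]
    refine Finset.prod_congr rfl fun i _ => ?_
    have hsy : ∀ j, A i (y i) j = A i j (y i) := fun j => if_symm _ _ _
    refine Eq.symm ?_
    calc ∑ j, A i (w i) j * A i (y i) j = ∑ j, A i (w i) j * A i j (y i) := by simp_rw [hsy]
      _ = A i (w i) (y i) := idem hq _ _ _
  calc (0:ℝ) ≤ ∑ t : Fin m → Fin q, (∑ w, v w * ∏ i, A i (w i) (t i))^2 :=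
        Finset.sum_nonneg fun t _ => sq_nonneg _
    _ = ∑ t : Fin m → Fin q, ∑ w : Fin m → Fin q, ∑ y : Fin m → Fin q,
          (v w * ∏ i, A i (w i) (t i)) * (v y * ∏ i, A i (y i) (t i)) := by
        refine Finset.sum_congr rfl fun t _ => ?_
        rw [sq, Finset.sum_mul_sum]
    _ = ∑ w : Fin m → Fin q, ∑ y : Fin m → Fin q, ∑ t : Fin m → Fin q,
          (v w * ∏ i, A i (w i) (t i)) * (v y * ∏ i, A i (y i) (t i)) := by
        rw [Finset.sum_comm]
        exact Finset.sum_congr rfl fun w _ => Finset.sum_comm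
    _ = ∑ w : Fin m → Fin q, ∑ y : Fin m → Fin q, v w * v y * ∏ i, A i (w i) (y i) := by
        refine Finset.sum_congr rfl fun w _ => Finset.sum_congr rfl fun y _ => ?_
        rw [key w y, Finset.mul_sum]
        refine Finset.sum_congr rfl fun t _ => ?_
        rw [Finset.prod_mul_distrib]
        ring

lemma psd {q m : ℕ} (hq : 0 < q) (k : ℕ) (v : (Fin m → Fin q) → ℝ) :
    0 ≤ ∑ w : Fin m → Fin q, ∑ y : Fin m → Fin q, v w * v y * Ek q m k w y := by
  have h : ∑ w : Fin m → Fin q, ∑ y : Fin m → Fin q, v w * v y * Ek q m k w y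
      = ∑ S ∈ Finset.powersetCard k (Finset.univ : Finset (Fin m)), ∑ w, ∑ y,
          v w * v y * ∏ i, (if i ∈ S then E1 q (w i) (y i) else E0 q (w i) (y i)) := by
    simp only [Ek, Matrix.of_apply, Finset.mul_sum]
    exact Eq.trans (Finset.sum_congr rfl fun w _ => Finset.sum_comm) Finset.sum_comm
  rw [h]
  exact Finset.sum_nonneg fun S _ => psd_term hq S v

lemma row_split {q m : ℕ} (f : Fin q → (Fin m → Fin q) → ℝ) :
    ∑ r ∈ Finset.univ.filter (fun r : Fin q × (Fin m → Fin q) =>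
        Function.Injective r.2 ∧ ∀ i, r.2 i ≠ r.1), f r.1 r.2
      = ∑ w ∈ Finset.univ.filter (fun w : Fin m → Fin q => Function.Injective w),
          ∑ z ∈ Finset.univ.filter (fun z => ∀ i, w i ≠ z), f z w := by
  rw [Finset.sum_filter, Fintype.sum_prod_type, Finset.sum_comm]
  simp only [Finset.sum_filter]
  refine Finset.sum_congr rfl fun w _ => ?_
  by_cases h : Function.Injective w
  · simp [h]
  · simp [h]

def ext {n q : ℕ} (hn : 2 ≤ n) (a b : Fin q) (y' : Fin (n-2) → Fin q) : Fin n → Fin q :=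
  fun j => if h0 : (j : ℕ) = 0 then a else if h1 : (j : ℕ) = 1 then b
    else y' ⟨(j : ℕ) - 2, by have := j.isLt; omega⟩

lemma rep {n : ℕ} (hn : 2 ≤ n) (j : Fin n) :
    j = (⟨0, by omega⟩ : Fin n) ∨ j = (⟨1, by omega⟩ : Fin n) ∨
      ∃ i : Fin (n-2), j = (⟨i.1 + 2, by have := i.isLt; omega⟩ : Fin n) := by
  by_cases h0 : (j : ℕ) = 0
  · exact Or.inl (Fin.ext h0)
  by_cases h1 : (j : ℕ) = 1
  · exact Or.inr (Or.inl (Fin.ext h1))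
  · refine Or.inr (Or.inr ⟨⟨(j:ℕ) - 2, by have := j.isLt; omega⟩, Fin.ext ?_⟩)
    simp only []
    have := j.isLt; omega

lemma ext_zero {n q : ℕ} (hn : 2 ≤ n) (a b : Fin q) (y' : Fin (n-2) → Fin q) (h : 0 < n) :
    ext hn a b y' ⟨0, h⟩ = a := by simp [ext]

lemma ext_one {n q : ℕ} (hn : 2 ≤ n) (a b : Fin q) (y' : Fin (n-2) → Fin q) (h : 1 < n) :
    ext hn a b y' ⟨1, h⟩ = b := by simp [ext]

lemma ext_tail {n q : ℕ} (hn : 2 ≤ n) (a b : Fin q) (y' : Fin (n-2) → Fin q) (i : Fin (n-2))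
    (h : i.1 + 2 < n) : ext hn a b y' ⟨i.1 + 2, h⟩ = y' i := by
  simp [ext]

lemma col_reindex {n q : ℕ} (hn : 2 ≤ n) (f : (Fin q × Fin q) → (Fin (n-2) → Fin q) → ℝ) :
    ∑ y ∈ Finset.univ.filter (fun y : Fin n → Fin q => Function.Injective y),
        f (y ⟨0, Nat.lt_of_lt_of_le Nat.zero_lt_two hn⟩,
           y ⟨1, Nat.lt_of_lt_of_le Nat.one_lt_two hn⟩)
          (fun i => y ⟨i.1 + 2, by have := i.isLt; omega⟩)
      = ∑ y' ∈ Finset.univ.filter (fun y' : Fin (n-2) → Fin q => Function.Injective y'),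
          ∑ a ∈ Finset.univ.filter (fun a : Fin q => ∀ i, y' i ≠ a),
            ∑ b ∈ Finset.univ.filter (fun b : Fin q => b ≠ a ∧ ∀ i, y' i ≠ b),
              f (a, b) y' := by
  classical
  have h0 : (0 : ℕ) < n := by omega
  have h1 : (1 : ℕ) < n := by omega
  set Pred : (Fin q × Fin q) × (Fin (n-2) → Fin q) → Prop := fun p =>
    Function.Injective p.2 ∧ ((∀ i, p.2 i ≠ p.1.1) ∧ (p.1.2 ≠ p.1.1 ∧ ∀ i, p.2 i ≠ p.1.2))
    with hPred
  have step1 : ∑ p ∈ Finset.univ.filter Pred, f p.1 p.2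
      = ∑ y' ∈ Finset.univ.filter (fun y' : Fin (n-2) → Fin q => Function.Injective y'),
          ∑ a ∈ Finset.univ.filter (fun a : Fin q => ∀ i, y' i ≠ a),
            ∑ b ∈ Finset.univ.filter (fun b : Fin q => b ≠ a ∧ ∀ i, y' i ≠ b),
              f (a, b) y' := by
    rw [Finset.sum_filter, Fintype.sum_prod_type, Finset.sum_comm]
    simp only [Finset.sum_filter]
    refine Finset.sum_congr rfl fun y' _ => ?_
    by_cases hy : Function.Injective y'
    · rw [if_pos hy, Fintype.sum_prod_type]
      refine Finset.sum_congr rfl fun a _ => ?_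
      by_cases ha : ∀ i, y' i ≠ a
      · rw [if_pos ha]
        refine Finset.sum_congr rfl fun b _ => ?_
        simp [hPred, hy, ha]
      · rw [if_neg ha]
        refine Finset.sum_eq_zero fun b _ => ?_
        simp [hPred, ha]
    · rw [if_neg hy]
      refine Finset.sum_eq_zero fun ab _ => ?_
      simp [hPred, hy]
  rw [← step1]
  refine Finset.sum_nbij'
    (fun y => ((y ⟨0, h0⟩, y ⟨1, h1⟩), fun i => y ⟨i.1 + 2, by have := i.isLt; omega⟩))
    (fun p => ext hn p.1.1 p.1.2 p.2) ?_ ?_ ?_ ?_ ?_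
  · intro y hy
    rw [Finset.mem_filter] at hy ⊢
    obtain ⟨-, hy⟩ := hy
    refine ⟨Finset.mem_univ _, ?_, ?_, ?_, ?_⟩
    · intro i1 i2 h
      simp only at h
      have hval : i1.1 + 2 = i2.1 + 2 := congrArg Fin.val (hy h)
      exact Fin.ext (by omega)
    · intro i h
      simp only at h
      have hval : i.1 + 2 = 0 := congrArg Fin.val (hy h)
      omega
    · intro h
      simp only at h
      have hval : (1 : ℕ) = 0 := congrArg Fin.val (hy h)
      omega
    · intro i h
      simp only at h
      have hval : i.1 + 2 = 1 := congrArg Fin.val (hy h)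
      omega
  · intro p hp
    rw [Finset.mem_filter] at hp ⊢
    obtain ⟨-, hinj, ha, hba, hb⟩ := hp
    refine ⟨Finset.mem_univ _, ?_⟩
    intro j1 j2 heq
    rcases rep hn j1 with rfl | rfl | ⟨i1, rfl⟩ <;> rcases rep hn j2 with rfl | rfl | ⟨i2, rfl⟩ <;>
        simp only [ext_zero, ext_one, ext_tail] at heq ⊢ <;>
      first
        | rfl
        | exact absurd heq.symm hba
        | exact absurd heq hba
        | exact absurd heq.symm (ha _)
        | exact absurd heq (ha _)
        | exact absurd heq.symm (hb _)
        | exact absurd heq (hb _)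
        | exact Fin.ext (by have h2 : i1.1 = i2.1 := congrArg Fin.val (hinj heq); simp [h2])
  · intro y _
    funext j
    simp only
    rcases rep hn j with rfl | rfl | ⟨i, rfl⟩ <;>
      simp only [ext_zero, ext_one, ext_tail]
  · intro p _
    refine Prod.ext (Prod.ext ?_ ?_) ?_
    · simp only [ext_zero]
    · simp only [ext_one]
    · funext i
      simp only [ext_tail]
  · intro y _
    rfl


lemma m_le_q {q m : ℕ} (y' : Fin m → Fin q) (hy : Function.Injective y') : m ≤ q := by
  have := Fintype.card_le_of_injective y' hy
  simpa using this

lemma filter_ne_card {q m : ℕ} (y' : Fin m → Fin q) (hy : Function.Injective y') :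
    (Finset.univ.filter (fun a : Fin q => ∀ i, y' i ≠ a)).card = q - m := by
  have h : Finset.univ.filter (fun a : Fin q => ∀ i, y' i ≠ a)
      = (Finset.image y' Finset.univ)ᶜ := by
    ext a
    simp
  rw [h, Finset.card_compl, Finset.card_image_of_injective _ hy]
  simp

lemma triple_sum {q m : ℕ} (hq : 0 < q) (w y' : Fin m → Fin q)
    (hw : Function.Injective w) (hy : Function.Injective y') :
    ∑ z ∈ Finset.univ.filter (fun z : Fin q => ∀ i, w i ≠ z),
      ∑ a ∈ Finset.univ.filter (fun a : Fin q => ∀ i, y' i ≠ a),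
        ∑ b ∈ Finset.univ.filter (fun b : Fin q => b ≠ a ∧ ∀ i, y' i ≠ b),
          FF q z (a, b)
      = 2*((q:ℝ)-m-1)/Real.sqrt q *
          ((Finset.univ.filter (fun z : Fin q => (∀ i, w i ≠ z) ∧ (∀ i, y' i ≠ z))).card)
        - ((q:ℝ)-m)^2*((q:ℝ)-m-1)/((q:ℝ)*Real.sqrt q) := by
  classical
  have hmq : m ≤ q := m_le_q y' hy
  have hqR : ((q:ℝ)) ≠ 0 := Nat.cast_ne_zero.2 hq.ne'
  have hs : Real.sqrt q ≠ 0 := by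
    refine Real.sqrt_ne_zero'.2 ?_
    exact_mod_cast hq
  set s := Real.sqrt q with hsdef
  set P := Finset.univ.filter (fun a : Fin q => ∀ i, y' i ≠ a) with hP
  set Z := Finset.univ.filter (fun z : Fin q => ∀ i, w i ≠ z) with hZ
  have hPcard : (P.card : ℝ) = (q:ℝ) - m := by
    rw [hP, filter_ne_card y' hy]
    push_cast [hmq]
    ring
  have hZcard : (Z.card : ℝ) = (q:ℝ) - m := by
    rw [hZ, filter_ne_card w hw]
    push_cast [hmq]
    ring
  have hFF : ∀ (z a b : Fin q), FF q z (a, b) = 1/((q:ℝ)*s) + (E1 q z a)/s + (E1 q z b)/s := by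
    intro z a b
    simp only [FF, Matrix.add_apply, F0, F1, Matrix.of_apply]
    ring
  have hbset : ∀ a : Fin q, Finset.univ.filter (fun b : Fin q => b ≠ a ∧ ∀ i, y' i ≠ b)
      = P.erase a := by
    intro a
    ext b
    simp [hP, Finset.mem_erase]
  have hberase : ∀ (z : Fin q), ∀ a ∈ P, ∑ b ∈ P.erase a, FF q z (a, b)
      = ((q:ℝ)-m-1)/((q:ℝ)*s) + ((q:ℝ)-m-1)*(E1 q z a)/s
        + ((if z ∈ P then (1:ℝ) else 0) - ((q:ℝ)-m)/q - E1 q z a)/s := by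
    intro z a ha
    rw [Finset.sum_congr rfl (fun b _ => hFF z a b)]
    rw [Finset.sum_add_distrib, Finset.sum_add_distrib, Finset.sum_const, Finset.sum_const,
      ← Finset.sum_div (P.erase a) (fun b => E1 q z b) s, Finset.sum_erase_eq_sub ha,
      sum_E1, hPcard, Finset.card_erase_of_mem ha]
    have h1 : P.card ≠ 0 := Finset.card_ne_zero_of_mem ha
    have hc : ((P.card - 1 : ℕ) : ℝ) = (q:ℝ) - m - 1 := by
      rw [Nat.cast_sub (Nat.one_le_iff_ne_zero.2 h1), hPcard]
      simp
    simp only [nsmul_eq_mul, hc]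
    ring
  have hasum : ∀ z : Fin q, ∑ a ∈ P, ∑ b ∈ P.erase a, FF q z (a, b)
      = (2*((q:ℝ)-m-1)/s) * (if z ∈ P then (1:ℝ) else 0)
        - ((q:ℝ)-m)*((q:ℝ)-m-1)/((q:ℝ)*s) := by
    intro z
    rw [Finset.sum_congr rfl (hberase z)]
    rw [Finset.sum_add_distrib, Finset.sum_add_distrib, Finset.sum_const]
    have h2 : ∑ a ∈ P, ((q:ℝ)-m-1)*(E1 q z a)/s
        = ((q:ℝ)-m-1)*((if z ∈ P then (1:ℝ) else 0) - ((q:ℝ)-m)/q)/s := by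
      rw [← Finset.sum_div, ← Finset.mul_sum, sum_E1, hPcard]
    have h3 : ∑ a ∈ P, ((if z ∈ P then (1:ℝ) else 0) - ((q:ℝ)-m)/q - E1 q z a)/s
        = (((q:ℝ)-m) * ((if z ∈ P then (1:ℝ) else 0) - ((q:ℝ)-m)/q)
            - ((if z ∈ P then (1:ℝ) else 0) - ((q:ℝ)-m)/q))/s := by
      rw [← Finset.sum_div, Finset.sum_sub_distrib, Finset.sum_const, sum_E1, nsmul_eq_mul,
        hPcard]
    rw [h2, h3, nsmul_eq_mul, hPcard]
    ring
  have hJ : ∑ z ∈ Z, (if z ∈ P then (1:ℝ) else 0)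
      = ((Finset.univ.filter (fun z : Fin q => (∀ i, w i ≠ z) ∧ (∀ i, y' i ≠ z))).card : ℝ) := by
    rw [Finset.sum_ite_mem, Finset.sum_const, nsmul_eq_mul, mul_one]
    congr 1
    rw [hZ, hP, ← Finset.filter_and]
  simp only [hbset]
  rw [Finset.sum_congr rfl (fun z _ => hasum z)]
  rw [Finset.sum_sub_distrib, ← Finset.mul_sum, hJ, Finset.sum_const, nsmul_eq_mul, hZcard]
  ring

lemma card_compl_inter {q m : ℕ} (w y' : Fin m → Fin q)
    (hw : Function.Injective w) (hy : Function.Injective y') :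
    ((Finset.univ.filter (fun z : Fin q => (∀ i, w i ≠ z) ∧ (∀ i, y' i ≠ z))).card : ℝ)
      = (q:ℝ) - 2*m
        + ((Finset.univ.filter (fun z : Fin q => (∃ i, w i = z) ∧ (∃ i, y' i = z))).card : ℝ) := by
  classical
  set A := Finset.image w Finset.univ with hA
  set B := Finset.image y' Finset.univ with hB
  have h1 : Finset.univ.filter (fun z : Fin q => (∀ i, w i ≠ z) ∧ (∀ i, y' i ≠ z)) = (A ∪ B)ᶜ := by
    ext z
    simp [hA, hB, not_or]
  have h2 : Finset.univ.filter (fun z : Fin q => (∃ i, w i = z) ∧ (∃ i, y' i = z)) = A ∩ B := by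
    ext z
    simp [hA, hB]
  have h3 : (A ∪ B).card + (A ∩ B).card = A.card + B.card := Finset.card_union_add_card_inter A B
  have h4 : A.card = m := by rw [hA, Finset.card_image_of_injective _ hw]; simp
  have h5 : B.card = m := by rw [hB, Finset.card_image_of_injective _ hy]; simp
  have h6 : (A ∪ B).card ≤ q := by
    have := Finset.card_le_univ (A ∪ B)
    simpa using this
  rw [h1, h2, Finset.card_compl]
  rw [Nat.cast_sub (by simpa using Finset.card_le_univ (A ∪ B))]
  have h3' : (A ∪ B).card + (A ∩ B).card = 2*m := by omega
  have h7 : ((A ∪ B).card : ℝ) + ((A ∩ B).card : ℝ) = 2*m := by exact_mod_cast h3'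
  simp only [Fintype.card_fin]
  linarith

lemma inter_card_eq {q m : ℕ} (w y : Fin m → Fin q) :
    ((Finset.univ.filter (fun z : Fin q => (∃ i, w i = z) ∧ (∃ i, y i = z))).card : ℝ)
      = ∑ c : Fin q, (if ∃ i, w i = c then (1:ℝ) else 0) * (if ∃ i, y i = c then 1 else 0) := by
  rw [Finset.card_filter]
  push_cast
  refine Finset.sum_congr rfl fun c _ => ?_
  by_cases h1 : ∃ i, w i = c <;> by_cases h2 : ∃ i, y i = c <;> simp [h1, h2]

lemma ind_sum {q m : ℕ} (w : Fin m → Fin q) (hw : Function.Injective w) :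
    ∑ c : Fin q, (if ∃ i, w i = c then (1:ℝ) else 0) = m := by
  rw [Finset.sum_boole]
  have h : Finset.univ.filter (fun c : Fin q => ∃ i, w i = c) = Finset.image w Finset.univ := by
    ext c; simp
  rw [h, Finset.card_image_of_injective _ hw]
  simp

lemma Ek_zero {q m : ℕ} (w y : Fin m → Fin q) : Ek q m 0 w y = (1/(q:ℝ))^m := by
  simp only [Ek, Matrix.of_apply, Finset.powersetCard_zero, Finset.sum_singleton,
    Finset.notMem_empty, if_false, E0, Matrix.of_apply, Finset.prod_const, Finset.card_univ,
    Fintype.card_fin]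

lemma BB_nonneg {q m : ℕ} (hq : 0 < q) (k : ℕ) :
    0 ≤ ∑ w ∈ Finset.univ.filter (fun w : Fin m → Fin q => Function.Injective w),
        ∑ y ∈ Finset.univ.filter (fun y : Fin m → Fin q => Function.Injective y),
          Ek q m k w y := by
  have heq : ∑ w ∈ Finset.univ.filter (fun w : Fin m → Fin q => Function.Injective w),
        ∑ y ∈ Finset.univ.filter (fun y : Fin m → Fin q => Function.Injective y), Ek q m k w y
      = ∑ w : Fin m → Fin q, ∑ y : Fin m → Fin q,
          (if Function.Injective w then (1:ℝ) else 0) *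
            (if Function.Injective y then (1:ℝ) else 0) * Ek q m k w y := by
    simp only [Finset.sum_filter]
    refine Finset.sum_congr rfl fun w _ => ?_
    by_cases h1 : Function.Injective w
    · simp only [h1, if_true, one_mul]
      refine Finset.sum_congr rfl fun y _ => ?_
      by_cases h2 : Function.Injective y <;> simp [h2]
    · simp [h1]
  rw [heq]
  exact psd hq k _

lemma AA_nonneg {q m : ℕ} (hq : 0 < q) (k : ℕ) :
    0 ≤ ∑ w ∈ Finset.univ.filter (fun w : Fin m → Fin q => Function.Injective w),
        ∑ y ∈ Finset.univ.filter (fun y : Fin m → Fin q => Function.Injective y),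
          ((Finset.univ.filter (fun z : Fin q => (∃ i, w i = z) ∧ (∃ i, y i = z))).card : ℝ)
            * Ek q m k w y := by
  have heq1 : ∑ w ∈ Finset.univ.filter (fun w : Fin m → Fin q => Function.Injective w),
        ∑ y ∈ Finset.univ.filter (fun y : Fin m → Fin q => Function.Injective y),
          ((Finset.univ.filter (fun z : Fin q => (∃ i, w i = z) ∧ (∃ i, y i = z))).card : ℝ)
            * Ek q m k w y
      = ∑ w : Fin m → Fin q, ∑ y : Fin m → Fin q, ∑ c : Fin q,
          ((if Function.Injective w then (1:ℝ) else 0) * (if ∃ i, w i = c then 1 else 0)) *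
          ((if Function.Injective y then (1:ℝ) else 0) * (if ∃ i, y i = c then 1 else 0)) *
            Ek q m k w y := by
    simp only [Finset.sum_filter]
    refine Finset.sum_congr rfl fun w _ => ?_
    by_cases h1 : Function.Injective w
    · simp only [h1, if_true, one_mul]
      refine Finset.sum_congr rfl fun y _ => ?_
      by_cases h2 : Function.Injective y
      · simp only [h2, if_true, one_mul]
        rw [inter_card_eq, Finset.sum_mul]
      · simp [h2]
    · simp [h1]
  rw [heq1]
  have heq2 : ∑ w : Fin m → Fin q, ∑ y : Fin m → Fin q, ∑ c : Fin q,
          ((if Function.Injective w then (1:ℝ) else 0) * (if ∃ i, w i = c then 1 else 0)) *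
          ((if Function.Injective y then (1:ℝ) else 0) * (if ∃ i, y i = c then 1 else 0)) *
            Ek q m k w y
      = ∑ c : Fin q, ∑ w : Fin m → Fin q, ∑ y : Fin m → Fin q,
          ((if Function.Injective w then (1:ℝ) else 0) * (if ∃ i, w i = c then 1 else 0)) *
          ((if Function.Injective y then (1:ℝ) else 0) * (if ∃ i, y i = c then 1 else 0)) *
            Ek q m k w y := by
    rw [Finset.sum_congr rfl fun w (_ : w ∈ Finset.univ) => Finset.sum_comm]
    exact Finset.sum_comm
  rw [heq2]
  refine Finset.sum_nonneg fun c _ => psd hq k _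

end Aux

namespace Aux
open Finset

lemma filter_b_eq {q m : ℕ} (y' : Fin m → Fin q) (a : Fin q) :
    Finset.univ.filter (fun b : Fin q => b ≠ a ∧ ∀ i, y' i ≠ b)
      = (Finset.univ.filter (fun x : Fin q => ∀ i, y' i ≠ x)).erase a := by
  ext b
  simp [Finset.mem_erase]

lemma coeff_eq (Q s M Lc P : ℝ) (hq : Q ≠ 0) (hs : s ≠ 0) :
    P/(Q*s) * (Lc*(Q-M)) * (Lc*((Q-M)*(Q-M-1)))
      = (2*(Q-M-1)/s) * (P * (M^2*Lc^2/Q))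
        + ((Q-M-1)*(Q^2-2*M*Q-M^2)/(Q*s)) * (P * Lc^2) := by
  field_simp
  ring

lemma swap_k {n q m : ℕ} (α : ℕ → ℝ) (rs : Finset (Fin q × (Fin m → Fin q)))
    (cs : Finset (Fin n → Fin q)) (g : (Fin q × (Fin m → Fin q)) → (Fin n → Fin q) → ℕ → ℝ) :
    ∑ r ∈ rs, ∑ y ∈ cs, ∑ k ∈ Finset.range (n-1), α k * g r y k
      = ∑ k ∈ Finset.range (n-1), α k * ∑ r ∈ rs, ∑ y ∈ cs, g r y k := by
  calc ∑ r ∈ rs, ∑ y ∈ cs, ∑ k ∈ Finset.range (n-1), α k * g r y k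
      = ∑ r ∈ rs, ∑ k ∈ Finset.range (n-1), ∑ y ∈ cs, α k * g r y k :=
        Finset.sum_congr rfl fun r _ => Finset.sum_comm
    _ = ∑ k ∈ Finset.range (n-1), ∑ r ∈ rs, ∑ y ∈ cs, α k * g r y k := Finset.sum_comm
    _ = ∑ k ∈ Finset.range (n-1), α k * ∑ r ∈ rs, ∑ y ∈ cs, g r y k := by
        refine Finset.sum_congr rfl fun k _ => ?_
        rw [Finset.mul_sum]
        exact Finset.sum_congr rfl fun r _ => (Finset.mul_sum _ _ _).symm

end Aux

set_option maxHeartbeats 1000000 in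
open ED Aux in
/-- For `G = Σ_k α_k (F ⊗ E_k^{(n−2)})` with `α_k ≥ 0`, `n ≥ 2` and `q ≥ n²`, the sum of
the entries of `G` over legal rows (rows `(z,w)` with `w` injective and `z` not among the
entries of `w`) and legal columns (injective `y`) is at least `α₀ · q^{−(n−1/2)} · R · C`,
where `R` and `C` are the numbers of legal rows and columns. -/
theorem stmt13 (n q : ℕ) (hn : 2 ≤ n) (hq : n ^ 2 ≤ q) (α : ℕ → ℝ)
    (hα : ∀ k, 0 ≤ α k) :
    α 0 * (q : ℝ) ^ (-((n : ℝ) - 1 / 2)) *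
        ((Finset.univ.filter (fun r : Fin q × (Fin (n - 2) → Fin q) =>
            Function.Injective r.2 ∧ ∀ i, r.2 i ≠ r.1)).card : ℝ) *
        ((Finset.univ.filter (fun y : Fin n → Fin q => Function.Injective y)).card : ℝ)
      ≤ ∑ r ∈ Finset.univ.filter (fun r : Fin q × (Fin (n - 2) → Fin q) =>
            Function.Injective r.2 ∧ ∀ i, r.2 i ≠ r.1),
          ∑ y ∈ Finset.univ.filter (fun y : Fin n → Fin q => Function.Injective y),
            ∑ k ∈ Finset.range (n - 1),
              α k * (FF q r.1 (y ⟨0, Nat.lt_of_lt_of_le Nat.zero_lt_two hn⟩,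
                       y ⟨1, Nat.lt_of_lt_of_le Nat.one_lt_two hn⟩) *
                Ek q (n - 2) k r.2 (fun i => y ⟨i.1 + 2, by have := i.isLt; omega⟩)) := by
  classical
  have hn0 : 0 < n := by omega
  have hq0 : 0 < q := lt_of_lt_of_le (by positivity) hq
  have hnq : n ≤ q := le_trans (Nat.le_self_pow two_ne_zero n) hq
  have hqm : ((n - 2) + 2)^2 ≤ q := by
    have : (n - 2) + 2 = n := by omega
    rw [this]; exact hq
  have hm1q : (n - 2) + 1 ≤ q := by nlinarith
  have h3m : 3 * (n - 2) ≤ q := by nlinarith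
  have hqR : (0:ℝ) < (q:ℝ) := by exact_mod_cast hq0
  have hsq : (0:ℝ) < Real.sqrt q := Real.sqrt_pos.2 hqR
  have hMq : ((((n - 2) : ℕ):ℝ) + 1) ≤ (q:ℝ) := by exact_mod_cast hm1q
  have h3M : 3*(((n - 2) : ℕ):ℝ) ≤ (q:ℝ) := by exact_mod_cast h3m
  have hM0 : (0:ℝ) ≤ (((n - 2) : ℕ):ℝ) := Nat.cast_nonneg _
  have hd0 : 0 ≤ (q:ℝ)^2 - 2*(((n - 2) : ℕ):ℝ)*(q:ℝ) - (((n - 2) : ℕ):ℝ)^2 := by nlinarith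
  have hc1 : 0 ≤ (q:ℝ) - (((n - 2) : ℕ):ℝ) - 1 := by linarith
  have hcge : 0 ≤ 2*((q:ℝ)-(((n - 2) : ℕ):ℝ)-1)/Real.sqrt q := by positivity
  have hdge : 0 ≤ ((q:ℝ)-(((n - 2) : ℕ):ℝ)-1)*((q:ℝ)^2-2*(((n - 2) : ℕ):ℝ)*(q:ℝ)-(((n - 2) : ℕ):ℝ)^2)/((q:ℝ)*Real.sqrt q) := by positivity
  -- Step 1: pull k out
  rw [swap_k α (Finset.univ.filter (fun r : Fin q × (Fin (n - 2) → Fin q) =>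
            Function.Injective r.2 ∧ ∀ i, r.2 i ≠ r.1)) (Finset.univ.filter (fun y : Fin n → Fin q => Function.Injective y))
      (fun r y k => FF q r.1 (y ⟨0, Nat.lt_of_lt_of_le Nat.zero_lt_two hn⟩,
                       y ⟨1, Nat.lt_of_lt_of_le Nat.one_lt_two hn⟩) *
                Ek q (n - 2) k r.2 (fun i => y ⟨i.1 + 2, by have := i.isLt; omega⟩))]
  -- Step 2: per-k identity
  have hVk : ∀ k, (∑ r ∈ Finset.univ.filter (fun r : Fin q × (Fin (n - 2) → Fin q) =>
            Function.Injective r.2 ∧ ∀ i, r.2 i ≠ r.1),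
          ∑ y ∈ Finset.univ.filter (fun y : Fin n → Fin q => Function.Injective y),
            FF q r.1 (y ⟨0, Nat.lt_of_lt_of_le Nat.zero_lt_two hn⟩, y ⟨1, Nat.lt_of_lt_of_le Nat.one_lt_two hn⟩) *
                Ek q (n - 2) k r.2 (fun i => y ⟨i.1 + 2, by have := i.isLt; omega⟩))
      = (2*((q:ℝ)-(((n - 2) : ℕ):ℝ)-1)/Real.sqrt q) * (∑ w ∈ Finset.univ.filter (fun w : Fin (n - 2) → Fin q => Function.Injective w),
            ∑ y' ∈ Finset.univ.filter (fun y' : Fin (n - 2) → Fin q => Function.Injective y'),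
              ((Finset.univ.filter (fun z : Fin q => (∃ i, w i = z) ∧ (∃ i, y' i = z))).card : ℝ)
                * Ek q (n - 2) k w y')
        + (((q:ℝ)-(((n - 2) : ℕ):ℝ)-1)*((q:ℝ)^2-2*(((n - 2) : ℕ):ℝ)*(q:ℝ)-(((n - 2) : ℕ):ℝ)^2)/((q:ℝ)*Real.sqrt q)) * (∑ w ∈ Finset.univ.filter (fun w : Fin (n - 2) → Fin q => Function.Injective w),
            ∑ y' ∈ Finset.univ.filter (fun y' : Fin (n - 2) → Fin q => Function.Injective y'),
              Ek q (n - 2) k w y') := by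
    intro k
    have hsne : Real.sqrt (q:ℝ) ≠ 0 := ne_of_gt hsq
    have hqne : ((q:ℝ)) ≠ 0 := ne_of_gt hqR
    calc (∑ r ∈ Finset.univ.filter (fun r : Fin q × (Fin (n - 2) → Fin q) =>
            Function.Injective r.2 ∧ ∀ i, r.2 i ≠ r.1),
          ∑ y ∈ Finset.univ.filter (fun y : Fin n → Fin q => Function.Injective y),
            FF q r.1 (y ⟨0, Nat.lt_of_lt_of_le Nat.zero_lt_two hn⟩, y ⟨1, Nat.lt_of_lt_of_le Nat.one_lt_two hn⟩) * Ek q (n - 2) k r.2 (fun i => y ⟨i.1 + 2, by have := i.isLt; omega⟩))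
        = ∑ w ∈ Finset.univ.filter (fun w : Fin (n - 2) → Fin q => Function.Injective w), ∑ z ∈ Finset.univ.filter (fun z : Fin q => ∀ i, w i ≠ z),
            ∑ y ∈ Finset.univ.filter (fun y : Fin n → Fin q => Function.Injective y),
              FF q z (y ⟨0, Nat.lt_of_lt_of_le Nat.zero_lt_two hn⟩, y ⟨1, Nat.lt_of_lt_of_le Nat.one_lt_two hn⟩) * Ek q (n - 2) k w (fun i => y ⟨i.1 + 2, by have := i.isLt; omega⟩) :=
          row_split (fun z w => ∑ y ∈ Finset.univ.filter (fun y : Fin n → Fin q => Function.Injective y),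
              FF q z (y ⟨0, Nat.lt_of_lt_of_le Nat.zero_lt_two hn⟩, y ⟨1, Nat.lt_of_lt_of_le Nat.one_lt_two hn⟩) * Ek q (n - 2) k w (fun i => y ⟨i.1 + 2, by have := i.isLt; omega⟩))
      _ = ∑ w ∈ Finset.univ.filter (fun w : Fin (n - 2) → Fin q => Function.Injective w), ∑ z ∈ Finset.univ.filter (fun z : Fin q => ∀ i, w i ≠ z),
            ∑ y' ∈ Finset.univ.filter (fun y' : Fin (n - 2) → Fin q => Function.Injective y'), ∑ a ∈ Finset.univ.filter (fun a : Fin q => ∀ i, y' i ≠ a), ∑ b ∈ Finset.univ.filter (fun b : Fin q => b ≠ a ∧ ∀ i, y' i ≠ b),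
              FF q z (a, b) * Ek q (n - 2) k w y' := by
          refine Finset.sum_congr rfl fun w _ => Finset.sum_congr rfl fun z _ => ?_
          exact col_reindex hn (fun ab y' => FF q z ab * Ek q (n - 2) k w y')
      _ = ∑ w ∈ Finset.univ.filter (fun w : Fin (n - 2) → Fin q => Function.Injective w), ∑ y' ∈ Finset.univ.filter (fun y' : Fin (n - 2) → Fin q => Function.Injective y'),
            ∑ z ∈ Finset.univ.filter (fun z : Fin q => ∀ i, w i ≠ z), ∑ a ∈ Finset.univ.filter (fun a : Fin q => ∀ i, y' i ≠ a), ∑ b ∈ Finset.univ.filter (fun b : Fin q => b ≠ a ∧ ∀ i, y' i ≠ b),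
              FF q z (a, b) * Ek q (n - 2) k w y' :=
          Finset.sum_congr rfl fun w _ => Finset.sum_comm
      _ = ∑ w ∈ Finset.univ.filter (fun w : Fin (n - 2) → Fin q => Function.Injective w), ∑ y' ∈ Finset.univ.filter (fun y' : Fin (n - 2) → Fin q => Function.Injective y'),
            (∑ z ∈ Finset.univ.filter (fun z : Fin q => ∀ i, w i ≠ z), ∑ a ∈ Finset.univ.filter (fun a : Fin q => ∀ i, y' i ≠ a), ∑ b ∈ Finset.univ.filter (fun b : Fin q => b ≠ a ∧ ∀ i, y' i ≠ b), FF q z (a, b)) * Ek q (n - 2) k w y' := by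
          refine Finset.sum_congr rfl fun w _ => Finset.sum_congr rfl fun y' _ => Eq.symm ?_
          rw [Finset.sum_mul]
          refine Finset.sum_congr rfl fun z _ => ?_
          rw [Finset.sum_mul]
          refine Finset.sum_congr rfl fun a _ => ?_
          rw [Finset.sum_mul]
      _ = ∑ w ∈ Finset.univ.filter (fun w : Fin (n - 2) → Fin q => Function.Injective w), ∑ y' ∈ Finset.univ.filter (fun y' : Fin (n - 2) → Fin q => Function.Injective y'),
            ((2*((q:ℝ)-(((n - 2) : ℕ):ℝ)-1)/Real.sqrt q) * ((Finset.univ.filter (fun z : Fin q => (∀ i, w i ≠ z) ∧ (∀ i, y' i ≠ z))).card : ℝ) - ((q:ℝ)-(((n - 2) : ℕ):ℝ))^2*((q:ℝ)-(((n - 2) : ℕ):ℝ)-1)/((q:ℝ)*Real.sqrt q)) * Ek q (n - 2) k w y' := by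
          refine Finset.sum_congr rfl fun w hw => Finset.sum_congr rfl fun y' hy' => ?_
          rw [triple_sum hq0 w y' (Finset.mem_filter.1 hw).2 (Finset.mem_filter.1 hy').2]
      _ = ∑ w ∈ Finset.univ.filter (fun w : Fin (n - 2) → Fin q => Function.Injective w), ∑ y' ∈ Finset.univ.filter (fun y' : Fin (n - 2) → Fin q => Function.Injective y'),
            ((2*((q:ℝ)-(((n - 2) : ℕ):ℝ)-1)/Real.sqrt q) * ((q:ℝ) - 2*(((n - 2) : ℕ):ℝ) + ((Finset.univ.filter (fun z : Fin q => (∃ i, w i = z) ∧ (∃ i, y' i = z))).card : ℝ)) - ((q:ℝ)-(((n - 2) : ℕ):ℝ))^2*((q:ℝ)-(((n - 2) : ℕ):ℝ)-1)/((q:ℝ)*Real.sqrt q)) * Ek q (n - 2) k w y' := by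
          refine Finset.sum_congr rfl fun w hw => Finset.sum_congr rfl fun y' hy' => ?_
          rw [card_compl_inter w y' (Finset.mem_filter.1 hw).2 (Finset.mem_filter.1 hy').2]
      _ = ∑ w ∈ Finset.univ.filter (fun w : Fin (n - 2) → Fin q => Function.Injective w), ∑ y' ∈ Finset.univ.filter (fun y' : Fin (n - 2) → Fin q => Function.Injective y'),
            ((2*((q:ℝ)-(((n - 2) : ℕ):ℝ)-1)/Real.sqrt q) * (((Finset.univ.filter (fun z : Fin q => (∃ i, w i = z) ∧ (∃ i, y' i = z))).card : ℝ) * Ek q (n - 2) k w y') + (((q:ℝ)-(((n - 2) : ℕ):ℝ)-1)*((q:ℝ)^2-2*(((n - 2) : ℕ):ℝ)*(q:ℝ)-(((n - 2) : ℕ):ℝ)^2)/((q:ℝ)*Real.sqrt q)) * Ek q (n - 2) k w y') := by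
          refine Finset.sum_congr rfl fun w _ => Finset.sum_congr rfl fun y' _ => ?_
          field_simp
          ring
      _ = (2*((q:ℝ)-(((n - 2) : ℕ):ℝ)-1)/Real.sqrt q) * (∑ w ∈ Finset.univ.filter (fun w : Fin (n - 2) → Fin q => Function.Injective w),
            ∑ y' ∈ Finset.univ.filter (fun y' : Fin (n - 2) → Fin q => Function.Injective y'),
              ((Finset.univ.filter (fun z : Fin q => (∃ i, w i = z) ∧ (∃ i, y' i = z))).card : ℝ)
                * Ek q (n - 2) k w y') + (((q:ℝ)-(((n - 2) : ℕ):ℝ)-1)*((q:ℝ)^2-2*(((n - 2) : ℕ):ℝ)*(q:ℝ)-(((n - 2) : ℕ):ℝ)^2)/((q:ℝ)*Real.sqrt q)) * (∑ w ∈ Finset.univ.filter (fun w : Fin (n - 2) → Fin q => Function.Injective w),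
            ∑ y' ∈ Finset.univ.filter (fun y' : Fin (n - 2) → Fin q => Function.Injective y'),
              Ek q (n - 2) k w y') := by
          rw [Finset.mul_sum, Finset.mul_sum, ← Finset.sum_add_distrib]
          refine Finset.sum_congr rfl fun w _ => ?_
          rw [Finset.mul_sum, Finset.mul_sum, ← Finset.sum_add_distrib]
  -- k = 0 computations
  have hB0 : (∑ w ∈ Finset.univ.filter (fun w : Fin (n - 2) → Fin q => Function.Injective w),
            ∑ y' ∈ Finset.univ.filter (fun y' : Fin (n - 2) → Fin q => Function.Injective y'),
              Ek q (n - 2) 0 w y') = (1/(q:ℝ))^(n - 2) * ((Finset.univ.filter (fun w : Fin (n - 2) → Fin q => Function.Injective w)).card : ℝ)^2 := by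
    calc (∑ w ∈ Finset.univ.filter (fun w : Fin (n - 2) → Fin q => Function.Injective w),
            ∑ y' ∈ Finset.univ.filter (fun y' : Fin (n - 2) → Fin q => Function.Injective y'),
              Ek q (n - 2) 0 w y')
        = ∑ w ∈ Finset.univ.filter (fun w : Fin (n - 2) → Fin q => Function.Injective w), ∑ y' ∈ Finset.univ.filter (fun y' : Fin (n - 2) → Fin q => Function.Injective y'), (1/(q:ℝ))^(n - 2) :=
          Finset.sum_congr rfl fun w _ => Finset.sum_congr rfl fun y' _ => Ek_zero w y'
      _ = (1/(q:ℝ))^(n - 2) * ((Finset.univ.filter (fun w : Fin (n - 2) → Fin q => Function.Injective w)).card : ℝ)^2 := by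
          rw [Finset.sum_const, Finset.sum_const, nsmul_eq_mul, nsmul_eq_mul]
          ring
  have hNc : ∑ c0 : Fin q, (∑ w ∈ Finset.univ.filter (fun w : Fin (n - 2) → Fin q => Function.Injective w), (if ∃ i, w i = c0 then (1:ℝ) else 0)) = (((n - 2) : ℕ):ℝ) * ((Finset.univ.filter (fun w : Fin (n - 2) → Fin q => Function.Injective w)).card : ℝ) := by
    rw [Finset.sum_comm]
    calc ∑ w ∈ Finset.univ.filter (fun w : Fin (n - 2) → Fin q => Function.Injective w), ∑ c0 : Fin q, (if ∃ i, w i = c0 then (1:ℝ) else 0)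
        = ∑ w ∈ Finset.univ.filter (fun w : Fin (n - 2) → Fin q => Function.Injective w), (((n - 2) : ℕ):ℝ) :=
          Finset.sum_congr rfl fun w hw => ind_sum w (Finset.mem_filter.1 hw).2
      _ = (((n - 2) : ℕ):ℝ) * ((Finset.univ.filter (fun w : Fin (n - 2) → Fin q => Function.Injective w)).card : ℝ) := by rw [Finset.sum_const, nsmul_eq_mul]; ring
  have hA0 : (1/(q:ℝ))^(n - 2) * ((((n - 2) : ℕ):ℝ)^2 * ((Finset.univ.filter (fun w : Fin (n - 2) → Fin q => Function.Injective w)).card : ℝ)^2 / (q:ℝ)) ≤ (∑ w ∈ Finset.univ.filter (fun w : Fin (n - 2) → Fin q => Function.Injective w),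
            ∑ y' ∈ Finset.univ.filter (fun y' : Fin (n - 2) → Fin q => Function.Injective y'),
              ((Finset.univ.filter (fun z : Fin q => (∃ i, w i = z) ∧ (∃ i, y' i = z))).card : ℝ)
                * Ek q (n - 2) 0 w y') := by
    have hAA0eq : (∑ w ∈ Finset.univ.filter (fun w : Fin (n - 2) → Fin q => Function.Injective w),
            ∑ y' ∈ Finset.univ.filter (fun y' : Fin (n - 2) → Fin q => Function.Injective y'),
              ((Finset.univ.filter (fun z : Fin q => (∃ i, w i = z) ∧ (∃ i, y' i = z))).card : ℝ)
                * Ek q (n - 2) 0 w y')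
        = (1/(q:ℝ))^(n - 2) * ∑ c0 : Fin q, (∑ w ∈ Finset.univ.filter (fun w : Fin (n - 2) → Fin q => Function.Injective w), (if ∃ i, w i = c0 then (1:ℝ) else 0))^2 := by
      calc (∑ w ∈ Finset.univ.filter (fun w : Fin (n - 2) → Fin q => Function.Injective w),
            ∑ y' ∈ Finset.univ.filter (fun y' : Fin (n - 2) → Fin q => Function.Injective y'),
              ((Finset.univ.filter (fun z : Fin q => (∃ i, w i = z) ∧ (∃ i, y' i = z))).card : ℝ)
                * Ek q (n - 2) 0 w y')
          = ∑ w ∈ Finset.univ.filter (fun w : Fin (n - 2) → Fin q => Function.Injective w), ∑ y' ∈ Finset.univ.filter (fun y' : Fin (n - 2) → Fin q => Function.Injective y'),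
              ∑ c0 : Fin q, (if ∃ i, w i = c0 then (1:ℝ) else 0) * (if ∃ i, y' i = c0 then (1:ℝ) else 0) * (1/(q:ℝ))^(n - 2) := by
            refine Finset.sum_congr rfl fun w _ => Finset.sum_congr rfl fun y' _ => ?_
            rw [Ek_zero, inter_card_eq, Finset.sum_mul]
        _ = ∑ c0 : Fin q, ∑ w ∈ Finset.univ.filter (fun w : Fin (n - 2) → Fin q => Function.Injective w), ∑ y' ∈ Finset.univ.filter (fun y' : Fin (n - 2) → Fin q => Function.Injective y'),
              (if ∃ i, w i = c0 then (1:ℝ) else 0) * (if ∃ i, y' i = c0 then (1:ℝ) else 0) * (1/(q:ℝ))^(n - 2) := by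
            rw [Finset.sum_congr rfl fun w (_ : w ∈ Finset.univ.filter (fun w : Fin (n - 2) → Fin q => Function.Injective w)) => Finset.sum_comm]
            exact Finset.sum_comm
        _ = (1/(q:ℝ))^(n - 2) * ∑ c0 : Fin q, (∑ w ∈ Finset.univ.filter (fun w : Fin (n - 2) → Fin q => Function.Injective w), (if ∃ i, w i = c0 then (1:ℝ) else 0))^2 := by
            rw [Finset.mul_sum]
            refine Finset.sum_congr rfl fun c0 _ => Eq.symm ?_
            rw [sq, Finset.sum_mul_sum, Finset.mul_sum]
            refine Finset.sum_congr rfl fun w _ => ?_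
            rw [Finset.mul_sum]
            refine Finset.sum_congr rfl fun y' _ => ?_
            ring
    rw [hAA0eq]
    have hCS := sq_sum_le_card_mul_sum_sq (s := (Finset.univ : Finset (Fin q)))
      (f := fun c0 => ∑ w ∈ Finset.univ.filter (fun w : Fin (n - 2) → Fin q => Function.Injective w), (if ∃ i, w i = c0 then (1:ℝ) else 0))
    rw [hNc, Finset.card_univ, Fintype.card_fin] at hCS
    have h1 : ((((n - 2) : ℕ):ℝ)*((Finset.univ.filter (fun w : Fin (n - 2) → Fin q => Function.Injective w)).card : ℝ))^2 / (q:ℝ)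
        ≤ ∑ c0 : Fin q, (∑ w ∈ Finset.univ.filter (fun w : Fin (n - 2) → Fin q => Function.Injective w), (if ∃ i, w i = c0 then (1:ℝ) else 0))^2 := by
      rw [div_le_iff₀ hqR]
      linarith [hCS]
    calc (1/(q:ℝ))^(n - 2) * ((((n - 2) : ℕ):ℝ)^2*((Finset.univ.filter (fun w : Fin (n - 2) → Fin q => Function.Injective w)).card : ℝ)^2/(q:ℝ))
        = (1/(q:ℝ))^(n - 2) * (((((n - 2) : ℕ):ℝ)*((Finset.univ.filter (fun w : Fin (n - 2) → Fin q => Function.Injective w)).card : ℝ))^2/(q:ℝ)) := by ring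
      _ ≤ (1/(q:ℝ))^(n - 2) * ∑ c0 : Fin q, (∑ w ∈ Finset.univ.filter (fun w : Fin (n - 2) → Fin q => Function.Injective w), (if ∃ i, w i = c0 then (1:ℝ) else 0))^2 :=
          mul_le_mul_of_nonneg_left h1 (by positivity)
  -- cards
  have hR : ((Finset.univ.filter (fun r : Fin q × (Fin (n - 2) → Fin q) =>
            Function.Injective r.2 ∧ ∀ i, r.2 i ≠ r.1)).card : ℝ) = ((Finset.univ.filter (fun w : Fin (n - 2) → Fin q => Function.Injective w)).card : ℝ) * ((q:ℝ) - (((n - 2) : ℕ):ℝ)) := by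
    have h1 : ((Finset.univ.filter (fun r : Fin q × (Fin (n - 2) → Fin q) =>
            Function.Injective r.2 ∧ ∀ i, r.2 i ≠ r.1)).card : ℝ) = ∑ r ∈ Finset.univ.filter (fun r : Fin q × (Fin (n - 2) → Fin q) =>
            Function.Injective r.2 ∧ ∀ i, r.2 i ≠ r.1), (1:ℝ) := by simp
    rw [h1, row_split (fun _ _ => (1:ℝ))]
    calc ∑ w ∈ Finset.univ.filter (fun w : Fin (n - 2) → Fin q => Function.Injective w), ∑ z ∈ Finset.univ.filter (fun z : Fin q => ∀ i, w i ≠ z), (1:ℝ)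
        = ∑ w ∈ Finset.univ.filter (fun w : Fin (n - 2) → Fin q => Function.Injective w), ((q:ℝ) - (((n - 2) : ℕ):ℝ)) := by
          refine Finset.sum_congr rfl fun w hw => ?_
          rw [Finset.sum_const, nsmul_eq_mul, mul_one, filter_ne_card w (Finset.mem_filter.1 hw).2,
            Nat.cast_sub (m_le_q w (Finset.mem_filter.1 hw).2)]
      _ = ((Finset.univ.filter (fun w : Fin (n - 2) → Fin q => Function.Injective w)).card : ℝ) * ((q:ℝ)-(((n - 2) : ℕ):ℝ)) := by rw [Finset.sum_const, nsmul_eq_mul]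
  have hC : ((Finset.univ.filter (fun y : Fin n → Fin q => Function.Injective y)).card : ℝ) = ((Finset.univ.filter (fun w : Fin (n - 2) → Fin q => Function.Injective w)).card : ℝ) * (((q:ℝ)-(((n - 2) : ℕ):ℝ)) * ((q:ℝ)-(((n - 2) : ℕ):ℝ)-1)) := by
    have h1 : ((Finset.univ.filter (fun y : Fin n → Fin q => Function.Injective y)).card : ℝ) = ∑ y ∈ Finset.univ.filter (fun y : Fin n → Fin q => Function.Injective y), (1:ℝ) := by simp
    rw [h1, col_reindex hn (fun _ _ => (1:ℝ))]
    calc ∑ y' ∈ Finset.univ.filter (fun y' : Fin (n - 2) → Fin q => Function.Injective y'), ∑ a ∈ Finset.univ.filter (fun a : Fin q => ∀ i, y' i ≠ a), ∑ b ∈ Finset.univ.filter (fun b : Fin q => b ≠ a ∧ ∀ i, y' i ≠ b), (1:ℝ)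
        = ∑ y' ∈ Finset.univ.filter (fun y' : Fin (n - 2) → Fin q => Function.Injective y'), (((q:ℝ)-(((n - 2) : ℕ):ℝ)) * ((q:ℝ)-(((n - 2) : ℕ):ℝ)-1)) := by
          refine Finset.sum_congr rfl fun y' hy' => ?_
          have hyinj := (Finset.mem_filter.1 hy').2
          calc ∑ a ∈ Finset.univ.filter (fun a : Fin q => ∀ i, y' i ≠ a), ∑ b ∈ Finset.univ.filter (fun b : Fin q => b ≠ a ∧ ∀ i, y' i ≠ b), (1:ℝ)
              = ∑ a ∈ Finset.univ.filter (fun a : Fin q => ∀ i, y' i ≠ a), ((q:ℝ)-(((n - 2) : ℕ):ℝ)-1) := by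
                refine Finset.sum_congr rfl fun a ha => ?_
                rw [Finset.sum_const, nsmul_eq_mul, mul_one, filter_b_eq y' a,
                  Finset.card_erase_of_mem ha, filter_ne_card y' hyinj,
                  Nat.cast_sub (by omega : 1 ≤ q - (n - 2)), Nat.cast_sub (m_le_q y' hyinj),
                  Nat.cast_one]
            _ = ((q:ℝ)-(((n - 2) : ℕ):ℝ))*((q:ℝ)-(((n - 2) : ℕ):ℝ)-1) := by
                rw [Finset.sum_const, nsmul_eq_mul, filter_ne_card y' hyinj,
                  Nat.cast_sub (m_le_q y' hyinj)]
      _ = ((Finset.univ.filter (fun w : Fin (n - 2) → Fin q => Function.Injective w)).card : ℝ) * (((q:ℝ)-(((n - 2) : ℕ):ℝ)) * ((q:ℝ)-(((n - 2) : ℕ):ℝ)-1)) := by rw [Finset.sum_const, nsmul_eq_mul]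
  -- the rpow value
  have hsne : Real.sqrt (q:ℝ) ≠ 0 := ne_of_gt hsq
  have hqne : ((q:ℝ)) ≠ 0 := ne_of_gt hqR
  have hX : (q:ℝ) ^ (-((n:ℝ) - 1/2)) = (1/(q:ℝ))^(n - 2) / ((q:ℝ) * Real.sqrt q) := by
    rw [Real.rpow_neg hqR.le, Real.rpow_sub hqR]
    rw [show ((n:ℝ)) = ((n:ℕ):ℝ) from rfl, Real.rpow_natCast, ← Real.sqrt_eq_rpow]
    have hpow : (q:ℝ)^(n:ℕ) = (q:ℝ)^(n - 2) * (q:ℝ)^2 := by rw [← pow_add]; congr 1; omega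
    have hss : Real.sqrt (q:ℝ) * Real.sqrt (q:ℝ) = (q:ℝ) := Real.mul_self_sqrt hqR.le
    rw [hpow, one_div, inv_pow]
    rw [eq_div_iff (by positivity), inv_mul_eq_div, div_eq_iff (by positivity)]
    field_simp
    nlinarith [hss, pow_pos hqR (n-2)]
  -- final assembly
  have hsum : (∑ k ∈ Finset.range (n-1), α k * ∑ r ∈ Finset.univ.filter (fun r : Fin q × (Fin (n - 2) → Fin q) =>
            Function.Injective r.2 ∧ ∀ i, r.2 i ≠ r.1),
          ∑ y ∈ Finset.univ.filter (fun y : Fin n → Fin q => Function.Injective y),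
            FF q r.1 (y ⟨0, Nat.lt_of_lt_of_le Nat.zero_lt_two hn⟩, y ⟨1, Nat.lt_of_lt_of_le Nat.one_lt_two hn⟩) * Ek q (n - 2) k r.2 (fun i => y ⟨i.1 + 2, by have := i.isLt; omega⟩))
      = ∑ k ∈ Finset.range (n-1), α k * ((2*((q:ℝ)-(((n - 2) : ℕ):ℝ)-1)/Real.sqrt q) * (∑ w ∈ Finset.univ.filter (fun w : Fin (n - 2) → Fin q => Function.Injective w),
            ∑ y' ∈ Finset.univ.filter (fun y' : Fin (n - 2) → Fin q => Function.Injective y'),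
              ((Finset.univ.filter (fun z : Fin q => (∃ i, w i = z) ∧ (∃ i, y' i = z))).card : ℝ)
                * Ek q (n - 2) k w y') + (((q:ℝ)-(((n - 2) : ℕ):ℝ)-1)*((q:ℝ)^2-2*(((n - 2) : ℕ):ℝ)*(q:ℝ)-(((n - 2) : ℕ):ℝ)^2)/((q:ℝ)*Real.sqrt q)) * (∑ w ∈ Finset.univ.filter (fun w : Fin (n - 2) → Fin q => Function.Injective w),
            ∑ y' ∈ Finset.univ.filter (fun y' : Fin (n - 2) → Fin q => Function.Injective y'),
              Ek q (n - 2) k w y')) :=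
    Finset.sum_congr rfl fun k _ => congrArg (fun t => α k * t) (hVk k)
  rw [hsum]
  have hb : (q:ℝ)^(-((n:ℝ)-1/2)) * ((Finset.univ.filter (fun r : Fin q × (Fin (n - 2) → Fin q) =>
            Function.Injective r.2 ∧ ∀ i, r.2 i ≠ r.1)).card : ℝ) * ((Finset.univ.filter (fun y : Fin n → Fin q => Function.Injective y)).card : ℝ)
      ≤ (2*((q:ℝ)-(((n - 2) : ℕ):ℝ)-1)/Real.sqrt q) * (∑ w ∈ Finset.univ.filter (fun w : Fin (n - 2) → Fin q => Function.Injective w),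
            ∑ y' ∈ Finset.univ.filter (fun y' : Fin (n - 2) → Fin q => Function.Injective y'),
              ((Finset.univ.filter (fun z : Fin q => (∃ i, w i = z) ∧ (∃ i, y' i = z))).card : ℝ)
                * Ek q (n - 2) 0 w y') + (((q:ℝ)-(((n - 2) : ℕ):ℝ)-1)*((q:ℝ)^2-2*(((n - 2) : ℕ):ℝ)*(q:ℝ)-(((n - 2) : ℕ):ℝ)^2)/((q:ℝ)*Real.sqrt q)) * (∑ w ∈ Finset.univ.filter (fun w : Fin (n - 2) → Fin q => Function.Injective w),
            ∑ y' ∈ Finset.univ.filter (fun y' : Fin (n - 2) → Fin q => Function.Injective y'),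
              Ek q (n - 2) 0 w y') := by
    rw [hX, hR, hC, hB0]
    have heq : (1/(q:ℝ))^(n - 2)/((q:ℝ)*Real.sqrt q) * (((Finset.univ.filter (fun w : Fin (n - 2) → Fin q => Function.Injective w)).card : ℝ)*((q:ℝ)-(((n - 2) : ℕ):ℝ))) * (((Finset.univ.filter (fun w : Fin (n - 2) → Fin q => Function.Injective w)).card : ℝ)*(((q:ℝ)-(((n - 2) : ℕ):ℝ))*((q:ℝ)-(((n - 2) : ℕ):ℝ)-1)))
        = (2*((q:ℝ)-(((n - 2) : ℕ):ℝ)-1)/Real.sqrt q) * ((1/(q:ℝ))^(n - 2) * ((((n - 2) : ℕ):ℝ)^2*((Finset.univ.filter (fun w : Fin (n - 2) → Fin q => Function.Injective w)).card : ℝ)^2/(q:ℝ))) + (((q:ℝ)-(((n - 2) : ℕ):ℝ)-1)*((q:ℝ)^2-2*(((n - 2) : ℕ):ℝ)*(q:ℝ)-(((n - 2) : ℕ):ℝ)^2)/((q:ℝ)*Real.sqrt q)) * ((1/(q:ℝ))^(n - 2) * ((Finset.univ.filter (fun w : Fin (n - 2) → Fin q => Function.Injective w)).card : ℝ)^2)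 := by
      exact coeff_eq (q:ℝ) (Real.sqrt q) (((n - 2) : ℕ):ℝ)
        (((Finset.univ.filter (fun w : Fin (n - 2) → Fin q => Function.Injective w)).card : ℝ))
        ((1/(q:ℝ))^(n - 2)) hqne hsne
    rw [heq]
    have h3 := mul_le_mul_of_nonneg_left hA0 hcge
    linarith
  calc α 0 * (q:ℝ)^(-((n:ℝ)-1/2)) * ((Finset.univ.filter (fun r : Fin q × (Fin (n - 2) → Fin q) =>
            Function.Injective r.2 ∧ ∀ i, r.2 i ≠ r.1)).card : ℝ) * ((Finset.univ.filter (fun y : Fin n → Fin q => Function.Injective y)).card : ℝ)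
      = α 0 * ((q:ℝ)^(-((n:ℝ)-1/2)) * ((Finset.univ.filter (fun r : Fin q × (Fin (n - 2) → Fin q) =>
            Function.Injective r.2 ∧ ∀ i, r.2 i ≠ r.1)).card : ℝ) * ((Finset.univ.filter (fun y : Fin n → Fin q => Function.Injective y)).card : ℝ)) := by ring
    _ ≤ α 0 * ((2*((q:ℝ)-(((n - 2) : ℕ):ℝ)-1)/Real.sqrt q) * (∑ w ∈ Finset.univ.filter (fun w : Fin (n - 2) → Fin q => Function.Injective w),
            ∑ y' ∈ Finset.univ.filter (fun y' : Fin (n - 2) → Fin q => Function.Injective y'),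
              ((Finset.univ.filter (fun z : Fin q => (∃ i, w i = z) ∧ (∃ i, y' i = z))).card : ℝ)
                * Ek q (n - 2) 0 w y') + (((q:ℝ)-(((n - 2) : ℕ):ℝ)-1)*((q:ℝ)^2-2*(((n - 2) : ℕ):ℝ)*(q:ℝ)-(((n - 2) : ℕ):ℝ)^2)/((q:ℝ)*Real.sqrt q)) * (∑ w ∈ Finset.univ.filter (fun w : Fin (n - 2) → Fin q => Function.Injective w),
            ∑ y' ∈ Finset.univ.filter (fun y' : Fin (n - 2) → Fin q => Function.Injective y'),
              Ek q (n - 2) 0 w y')) := mul_le_mul_of_nonneg_left hb (hα 0)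
    _ ≤ ∑ k ∈ Finset.range (n-1), α k * ((2*((q:ℝ)-(((n - 2) : ℕ):ℝ)-1)/Real.sqrt q) * (∑ w ∈ Finset.univ.filter (fun w : Fin (n - 2) → Fin q => Function.Injective w),
            ∑ y' ∈ Finset.univ.filter (fun y' : Fin (n - 2) → Fin q => Function.Injective y'),
              ((Finset.univ.filter (fun z : Fin q => (∃ i, w i = z) ∧ (∃ i, y' i = z))).card : ℝ)
                * Ek q (n - 2) k w y') + (((q:ℝ)-(((n - 2) : ℕ):ℝ)-1)*((q:ℝ)^2-2*(((n - 2) : ℕ):ℝ)*(q:ℝ)-(((n - 2) : ℕ):ℝ)^2)/((q:ℝ)*Real.sqrt q)) * (∑ w ∈ Finset.univ.filter (fun w : Fin (n - 2) → Fin q => Function.Injective w),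
            ∑ y' ∈ Finset.univ.filter (fun y' : Fin (n - 2) → Fin q => Function.Injective y'),
              Ek q (n - 2) k w y')) := by
        refine Finset.single_le_sum (f := fun k => α k * ((2*((q:ℝ)-(((n - 2) : ℕ):ℝ)-1)/Real.sqrt q) * (∑ w ∈ Finset.univ.filter (fun w : Fin (n - 2) → Fin q => Function.Injective w),
            ∑ y' ∈ Finset.univ.filter (fun y' : Fin (n - 2) → Fin q => Function.Injective y'),
              ((Finset.univ.filter (fun z : Fin q => (∃ i, w i = z) ∧ (∃ i, y' i = z))).card : ℝ)
                * Ek q (n - 2) k w y') + (((q:ℝ)-(((n - 2) : ℕ):ℝ)-1)*((q:ℝ)^2-2*(((n - 2) : ℕ):ℝ)*(q:ℝ)-(((n - 2) : ℕ):ℝ)^2)/((q:ℝ)*Real.sqrt q)) * (∑ w ∈ Finset.univ.filter (fun w : Fin (n - 2) → Fin q => Function.Injective w),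
            ∑ y' ∈ Finset.univ.filter (fun y' : Fin (n - 2) → Fin q => Function.Injective y'),
              Ek q (n - 2) k w y')))
          (fun k _ => mul_nonneg (hα k) (add_nonneg (mul_nonneg hcge (AA_nonneg hq0 k))
            (mul_nonneg hdge (BB_nonneg hq0 k)))) (Finset.mem_range.2 (by omega))
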